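/- For any commutative Krasner hyperring R with unit, Spec(R) is quasi-compact under the Zariski topology, and more generally each basic open set W(x) = {P ∈ Spec(R) : x ∉ P} is quasi-compact; an open subset of Spec(R) is quasi-compact if and only if it is a finite union of sets W(x_i). -/
import Mathlib


universe u

/-- A commutative Krasner hyperring with unit: `(R,+)` is a canonical hypergroup
(multivalued addition), `(R,·)` is a commutative monoid, `·` distributes over `+`
and `0` is absorbing. -/
structure KHR (R : Type u) where
  hadd : R → R → Set R
  mul : R → R → R
  zero : R
  one : R
  neg : R → R
  hadd_comm : ∀ a b, hadd a b = hadd b a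
  hadd_assoc : ∀ a b c, (⋃ x ∈ hadd a b, hadd x c) = ⋃ y ∈ hadd b c, hadd a y
  zero_hadd : ∀ a, hadd zero a = {a}
  neg_mem : ∀ a, zero ∈ hadd a (neg a)
  neg_unique : ∀ a b, zero ∈ hadd a b → b = neg a
  reversible : ∀ a b c, c ∈ hadd a b → b ∈ hadd (neg a) c
  mul_assoc : ∀ a b c, mul (mul a b) c = mul a (mul b c)
  mul_comm : ∀ a b, mul a b = mul b a
  one_mul : ∀ a, mul one a = a
  zero_mul : ∀ a, mul zero a = zero
  distrib : ∀ a b c, (fun x => mul a x) '' hadd b c = hadd (mul a b) (mul a c)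

namespace KHR

variable {R : Type u} {S : Type u} {T : Type u} {Q : Type u}

/-- Sum of two subsets: `A + B = ⋃ {a + b : a ∈ A, b ∈ B}`. -/
def sumSet (H : KHR R) (A B : Set R) : Set R := ⋃ a ∈ A, ⋃ b ∈ B, H.hadd a b

/-- The coset `x + I`. -/
def coset (H : KHR R) (x : R) (I : Set R) : Set R := H.sumSet {x} I

/-- Hyperideal of a Krasner hyperring. -/
def IsHyperideal (H : KHR R) (I : Set R) : Prop :=
  H.zero ∈ I ∧ (∀ a ∈ I, ∀ b ∈ I, H.hadd a b ⊆ I) ∧ (∀ a ∈ I, H.neg a ∈ I) ∧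
    ∀ r : R, ∀ a ∈ I, H.mul r a ∈ I

/-- Prime hyperideal. -/
def IsPrime (H : KHR R) (P : Set R) : Prop :=
  H.IsHyperideal P ∧ P ≠ Set.univ ∧ ∀ a b : R, H.mul a b ∈ P → a ∈ P ∨ b ∈ P

/-- Maximal hyperideal. -/
def IsMaximal (H : KHR R) (M : Set R) : Prop :=
  H.IsHyperideal M ∧ M ≠ Set.univ ∧ ∀ J : Set R, H.IsHyperideal J → M ⊂ J → J = Set.univ

/-- The prime spectrum. -/
def Spectrum (H : KHR R) : Type u := {P : Set R // H.IsPrime P}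

/-- The Zariski-closed set attached to a set of elements. -/
def V (H : KHR R) (s : Set R) : Set H.Spectrum := {P | s ⊆ P.1}

/-- The basic Zariski-open set attached to an element. -/
def W (H : KHR R) (x : R) : Set H.Spectrum := {P | x ∉ P.1}

/-- The hyperideal generated by a set. -/
def genIdeal (H : KHR R) (s : Set R) : Set R := ⋂₀ {I | H.IsHyperideal I ∧ s ⊆ I}

/-- The product `IJ` of two hyperideals. -/
def mulIdeal (H : KHR R) (I J : Set R) : Set R :=
  H.genIdeal {x | ∃ a ∈ I, ∃ b ∈ J, x = H.mul a b}

/-- The Zariski topology on the prime spectrum. -/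
def zariski (H : KHR R) : TopologicalSpace H.Spectrum :=
  TopologicalSpace.generateFrom {U | ∃ I : Set R, H.IsHyperideal I ∧ U = (H.V I)ᶜ}

/-- Powers of an element. -/
def pow (H : KHR R) (x : R) : ℕ → R
  | 0 => H.one
  | n+1 => H.mul x (H.pow x n)

/-- The nilradical. -/
def nil (H : KHR R) : Set R := {x | ∃ n : ℕ, H.pow x (n+1) = H.zero}

/-- The radical of a hyperideal. -/
def radical (H : KHR R) (I : Set R) : Set R := {x | ∃ n : ℕ, H.pow x (n+1) ∈ I}

/-- Units. -/
def IsUnit (H : KHR R) (x : R) : Prop := ∃ y, H.mul x y = H.one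

/-- Good homomorphism of Krasner hyperrings. -/
structure GoodHom (H : KHR R) (K : KHR S) where
  toFun : R → S
  map_hadd : ∀ a b, toFun '' H.hadd a b = K.hadd (toFun a) (toFun b)
  map_mul : ∀ a b, toFun (H.mul a b) = K.mul (toFun a) (toFun b)
  map_zero : toFun H.zero = K.zero
  map_one : toFun H.one = K.one

theorem comap_prime (H : KHR R) (K : KHR S) (f : GoodHom H K) {P : Set S}
    (hP : K.IsPrime P) : H.IsPrime (f.toFun ⁻¹' P) := by
  obtain ⟨⟨h0, haddc, hneg, hmulc⟩, hne, hpr⟩ := hP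
  refine ⟨⟨?_, ?_, ?_, ?_⟩, ?_, ?_⟩
  · show f.toFun H.zero ∈ P
    rw [f.map_zero]; exact h0
  · intro a ha b hb c hc
    have : f.toFun c ∈ K.hadd (f.toFun a) (f.toFun b) := by
      rw [← f.map_hadd]; exact ⟨c, hc, rfl⟩
    exact haddc _ ha _ hb this
  · intro a ha
    have hz : K.zero ∈ K.hadd (f.toFun a) (f.toFun (H.neg a)) := by
      rw [← f.map_hadd, ← f.map_zero]
      exact ⟨H.zero, H.neg_mem a, rfl⟩
    have : f.toFun (H.neg a) = K.neg (f.toFun a) := K.neg_unique _ _ hz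
    show f.toFun (H.neg a) ∈ P
    rw [this]; exact hneg _ ha
  · intro r a ha
    show f.toFun (H.mul r a) ∈ P
    rw [f.map_mul]; exact hmulc _ _ ha
  · intro hU
    apply hne
    ext s
    simp only [Set.mem_univ, iff_true]
    have h1 : f.toFun H.one ∈ P := by
      have : H.one ∈ f.toFun ⁻¹' P := by rw [hU]; trivial
      exact this
    have : K.mul s (f.toFun H.one) ∈ P := hmulc s _ h1
    rwa [f.map_one, K.mul_comm, K.one_mul] at this
  · intro a b hab
    have : K.mul (f.toFun a) (f.toFun b) ∈ P := by rw [← f.map_mul]; exact hab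
    exact hpr _ _ this

/-- The induced map on spectra. -/
def specMap (H : KHR R) (K : KHR S) (f : GoodHom H K) : K.Spectrum → H.Spectrum :=
  fun P => ⟨f.toFun ⁻¹' P.1, comap_prime H K f P.2⟩

/-- `K` is the quotient hyperring of `H` by the hyperideal `I`, witnessed by the
canonical projection. -/
structure IsQuotient (H : KHR R) (K : KHR Q) (I : Set R) where
  hom : GoodHom H K
  surj : Function.Surjective hom.toFun
  fiber : ∀ x y, hom.toFun x = hom.toFun y ↔ H.coset x I = H.coset y I

/-- Strongly regular (equivalence) relation on a Krasner hyperring. -/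
def StronglyRegular (H : KHR R) (ρ : R → R → Prop) : Prop :=
  Equivalence ρ ∧ ∀ a b c d, ρ a b → ρ c d →
    (∀ x ∈ H.hadd a c, ∀ y ∈ H.hadd b d, ρ x y) ∧ ρ (H.mul a c) (H.mul b d)

/-- The fundamental relation `γ*`: the smallest strongly regular relation. -/
def gamma (H : KHR R) : R → R → Prop := fun x y => ∀ ρ, H.StronglyRegular ρ → ρ x y

/-- The zero class `γ*(0)` of the fundamental relation. -/
def gammaZero (H : KHR R) : Set R := {x | H.gamma x H.zero}



/-- The product of two Krasner hyperrings, with componentwise hyperoperations. -/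
def prodKHR (H : KHR R) (K : KHR S) : KHR (R × S) where
  hadd a b := H.hadd a.1 b.1 ×ˢ K.hadd a.2 b.2
  mul a b := (H.mul a.1 b.1, K.mul a.2 b.2)
  zero := (H.zero, K.zero)
  one := (H.one, K.one)
  neg a := (H.neg a.1, K.neg a.2)
  hadd_comm a b := by beta_reduce; rw [H.hadd_comm, K.hadd_comm]
  hadd_assoc a b c := by
    beta_reduce
    have h1 := H.hadd_assoc a.1 b.1 c.1
    have h2 := K.hadd_assoc a.2 b.2 c.2
    ext ⟨p, q⟩
    have e1 : p ∈ (⋃ x ∈ H.hadd a.1 b.1, H.hadd x c.1) ↔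
        p ∈ ⋃ y ∈ H.hadd b.1 c.1, H.hadd a.1 y := by rw [h1]
    have e2 : q ∈ (⋃ x ∈ K.hadd a.2 b.2, K.hadd x c.2) ↔
        q ∈ ⋃ y ∈ K.hadd b.2 c.2, K.hadd a.2 y := by rw [h2]
    simp only [Set.mem_iUnion, Set.mem_prod] at e1 e2 ⊢
    constructor
    · rintro ⟨⟨x1, x2⟩, ⟨⟨hx1, hx2⟩, hp, hq⟩⟩
      obtain ⟨y1, hy1, hp'⟩ := e1.1 ⟨x1, hx1, hp⟩
      obtain ⟨y2, hy2, hq'⟩ := e2.1 ⟨x2, hx2, hq⟩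
      exact ⟨(y1, y2), ⟨hy1, hy2⟩, hp', hq'⟩
    · rintro ⟨⟨y1, y2⟩, ⟨⟨hy1, hy2⟩, hp, hq⟩⟩
      obtain ⟨x1, hx1, hp'⟩ := e1.2 ⟨y1, hy1, hp⟩
      obtain ⟨x2, hx2, hq'⟩ := e2.2 ⟨y2, hy2, hq⟩
      exact ⟨(x1, x2), ⟨hx1, hx2⟩, hp', hq'⟩
  zero_hadd a := by
    beta_reduce
    rw [H.zero_hadd, K.zero_hadd, Set.singleton_prod_singleton]
  neg_mem a := ⟨H.neg_mem a.1, K.neg_mem a.2⟩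
  neg_unique a b h := Prod.ext (H.neg_unique _ _ h.1) (K.neg_unique _ _ h.2)
  reversible a b c h := ⟨H.reversible _ _ _ h.1, K.reversible _ _ _ h.2⟩
  mul_assoc a b c := Prod.ext (H.mul_assoc _ _ _) (K.mul_assoc _ _ _)
  mul_comm a b := Prod.ext (H.mul_comm _ _) (K.mul_comm _ _)
  one_mul a := Prod.ext (H.one_mul _) (K.one_mul _)
  zero_mul a := Prod.ext (H.zero_mul _) (K.zero_mul _)
  distrib a b c := by
    ext ⟨p, q⟩
    simp only [Set.mem_image, Set.mem_prod]
    constructor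
    · rintro ⟨⟨x, y⟩, ⟨hx, hy⟩, h⟩
      obtain ⟨h1, h2⟩ := Prod.mk.injEq .. ▸ h
      constructor
      · rw [← H.distrib]; exact ⟨x, hx, h1⟩
      · rw [← K.distrib]; exact ⟨y, hy, h2⟩
    · rintro ⟨hp, hq⟩
      rw [← H.distrib] at hp
      rw [← K.distrib] at hq
      obtain ⟨x, hx, hx'⟩ := hp
      obtain ⟨y, hy, hy'⟩ := hq
      exact ⟨(x, y), ⟨hx, hy⟩, by simp [hx', hy']⟩


section Stmt17Aux

variable (H : KHR R)

lemma univ_hyperideal' : H.IsHyperideal Set.univ :=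
  ⟨trivial, fun _ _ _ _ => Set.subset_univ _, fun _ _ => trivial, fun _ _ _ => trivial⟩

lemma genIdeal_hyperideal' (s : Set R) : H.IsHyperideal (H.genIdeal s) := by
  refine ⟨?_, ?_, ?_, ?_⟩
  · intro I hI; exact hI.1.1
  · intro a ha b hb c hc I hI
    exact hI.1.2.1 a (ha I hI) b (hb I hI) hc
  · intro a ha I hI; exact hI.1.2.2.1 a (ha I hI)
  · intro r a ha I hI; exact hI.1.2.2.2 r a (ha I hI)

lemma subset_genIdeal' (s : Set R) : s ⊆ H.genIdeal s :=
  fun x hx I hI => hI.2 hx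

lemma genIdeal_le' {s I : Set R} (hI : H.IsHyperideal I) (hs : s ⊆ I) :
    H.genIdeal s ⊆ I :=
  Set.sInter_subset_of_mem ⟨hI, hs⟩

lemma genIdeal_mono' {s t : Set R} (hst : s ⊆ t) : H.genIdeal s ⊆ H.genIdeal t :=
  H.genIdeal_le' (H.genIdeal_hyperideal' t) (hst.trans (H.subset_genIdeal' t))

lemma mul_one' (a : R) : H.mul a H.one = a := by rw [H.mul_comm, H.one_mul]

lemma mul_zero' (a : R) : H.mul a H.zero = H.zero := by rw [H.mul_comm, H.zero_mul]

lemma mul_neg' (r a : R) : H.mul r (H.neg a) = H.neg (H.mul r a) := by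
  refine H.neg_unique _ _ ?_
  rw [← H.distrib]
  exact ⟨H.zero, H.neg_mem a, H.mul_zero' r⟩

lemma pow_add' (x : R) (m n : ℕ) : H.mul (H.pow x m) (H.pow x n) = H.pow x (m + n) := by
  induction m with
  | zero => simp [KHR.pow, H.one_mul]
  | succ k ih =>
    show H.mul (H.mul x (H.pow x k)) (H.pow x n) = H.pow x (k + 1 + n)
    rw [H.mul_assoc, ih]
    have : k + 1 + n = (k + n) + 1 := by omega
    rw [this]; rfl

lemma one_not_mem_prime' {P : Set R} (hP : H.IsPrime P) : H.one ∉ P := by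
  intro h1
  apply hP.2.1
  ext r
  simp only [Set.mem_univ, iff_true]
  have := hP.1.2.2.2 r H.one h1
  rwa [H.mul_one'] at this

lemma pow_mem_prime' {P : Set R} (hP : H.IsPrime P) {x : R} :
    ∀ n : ℕ, H.pow x (n + 1) ∈ P → x ∈ P := by
  intro n
  induction n with
  | zero =>
    intro h
    rcases hP.2.2 x (H.pow x 0) h with h' | h'
    · exact h'
    · exact absurd h' (H.one_not_mem_prime' hP)
  | succ k ih =>
    intro h
    rcases hP.2.2 x (H.pow x (k + 1)) h with h' | h'
    · exact h'
    · exact ih h'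

lemma genIdeal_finite' {s : Set R} {x : R} (hx : x ∈ H.genIdeal s) :
    ∃ t : Finset R, ↑t ⊆ s ∧ x ∈ H.genIdeal ↑t := by
  classical
  set G : Set R := {y | ∃ t : Finset R, ↑t ⊆ s ∧ y ∈ H.genIdeal ↑t} with hG
  have hGideal : H.IsHyperideal G := by
    refine ⟨?_, ?_, ?_, ?_⟩
    · exact ⟨∅, by simp, (H.genIdeal_hyperideal' _).1⟩
    · rintro a ⟨t1, ht1, ha⟩ b ⟨t2, ht2, hb⟩ c hc
      refine ⟨t1 ∪ t2, ?_, ?_⟩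
      · rw [Finset.coe_union]; exact Set.union_subset ht1 ht2
      · have h1 : (H.genIdeal ↑t1 : Set R) ⊆ H.genIdeal ↑(t1 ∪ t2) := by
          apply H.genIdeal_mono'; rw [Finset.coe_union]; exact Set.subset_union_left
        have h2 : (H.genIdeal ↑t2 : Set R) ⊆ H.genIdeal ↑(t1 ∪ t2) := by
          apply H.genIdeal_mono'; rw [Finset.coe_union]; exact Set.subset_union_right
        exact (H.genIdeal_hyperideal' _).2.1 a (h1 ha) b (h2 hb) hc
    · rintro a ⟨t, ht, ha⟩
      exact ⟨t, ht, (H.genIdeal_hyperideal' _).2.2.1 a ha⟩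
    · rintro r a ⟨t, ht, ha⟩
      exact ⟨t, ht, (H.genIdeal_hyperideal' _).2.2.2 r a ha⟩
  have hsG : s ⊆ G := by
    intro y hy
    exact ⟨{y}, by simpa using hy, H.subset_genIdeal' _ (by simp)⟩
  exact H.genIdeal_le' hGideal hsG hx

lemma mul_mem_gen' {M : Set R} (hM : H.IsHyperideal M) (a b : R) :
    ∀ u ∈ H.genIdeal (M ∪ {a}), ∀ v ∈ H.genIdeal (M ∪ {b}),
      H.mul u v ∈ H.genIdeal (M ∪ {H.mul a b}) := by
  set K : Set R := H.genIdeal (M ∪ {H.mul a b}) with hKdef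
  have hK : H.IsHyperideal K := H.genIdeal_hyperideal' _
  have hMK : M ⊆ K := Set.subset_union_left.trans (H.subset_genIdeal' _)
  have step1 : ∀ u ∈ H.genIdeal (M ∪ {a}), H.mul u b ∈ K := by
    have hT : H.IsHyperideal {u | H.mul u b ∈ K} := by
      refine ⟨?_, ?_, ?_, ?_⟩
      · show H.mul H.zero b ∈ K; rw [H.zero_mul]; exact hK.1
      · intro u1 hu1 u2 hu2 w hw
        show H.mul w b ∈ K
        rw [H.mul_comm]
        have himg : H.mul b w ∈ (fun x => H.mul b x) '' H.hadd u1 u2 := ⟨w, hw, rfl⟩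
        rw [H.distrib] at himg
        have e1 : H.mul b u1 = H.mul u1 b := H.mul_comm _ _
        have e2 : H.mul b u2 = H.mul u2 b := H.mul_comm _ _
        exact hK.2.1 _ (e1 ▸ hu1) _ (e2 ▸ hu2) himg
      · intro u hu
        show H.mul (H.neg u) b ∈ K
        rw [H.mul_comm, H.mul_neg', H.mul_comm]
        exact hK.2.2.1 _ hu
      · intro r u hu
        show H.mul (H.mul r u) b ∈ K
        rw [H.mul_assoc]
        exact hK.2.2.2 r _ hu
    refine H.genIdeal_le' hT (Set.union_subset ?_ ?_)
    · intro m hm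
      show H.mul m b ∈ K
      rw [H.mul_comm]
      exact hMK (hM.2.2.2 b m hm)
    · intro z hz
      rcases hz with rfl
      exact H.subset_genIdeal' _ (Set.mem_union_right _ rfl)
  intro u hu
  have hT' : H.IsHyperideal {v | H.mul u v ∈ K} := by
    refine ⟨?_, ?_, ?_, ?_⟩
    · show H.mul u H.zero ∈ K; rw [H.mul_zero']; exact hK.1
    · intro v1 hv1 v2 hv2 w hw
      show H.mul u w ∈ K
      have himg : H.mul u w ∈ (fun x => H.mul u x) '' H.hadd v1 v2 := ⟨w, hw, rfl⟩
      rw [H.distrib] at himg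
      exact hK.2.1 _ hv1 _ hv2 himg
    · intro v hv
      show H.mul u (H.neg v) ∈ K
      rw [H.mul_neg']
      exact hK.2.2.1 _ hv
    · intro r v hv
      show H.mul u (H.mul r v) ∈ K
      rw [← H.mul_assoc, H.mul_comm u r, H.mul_assoc]
      exact hK.2.2.2 r _ hv
  intro v hv
  refine H.genIdeal_le' hT' (Set.union_subset ?_ ?_) hv
  · intro m hm
    exact hMK (hM.2.2.2 u m hm)
  · intro z hz
    rcases hz with rfl
    exact step1 u hu

lemma exists_prime' {I : Set R} (hI : H.IsHyperideal I) (x : R)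
    (hx : ∀ n : ℕ, H.pow x (n + 1) ∉ I) :
    ∃ P : Set R, H.IsPrime P ∧ I ⊆ P ∧ x ∉ P := by
  set Z : Set (Set R) := {J | H.IsHyperideal J ∧ I ⊆ J ∧ ∀ n : ℕ, H.pow x (n + 1) ∉ J}
    with hZdef
  have hZI : I ∈ Z := ⟨hI, subset_rfl, hx⟩
  have hub : ∀ c ⊆ Z, IsChain (· ⊆ ·) c → c.Nonempty → ∃ ub ∈ Z, ∀ s ∈ c, s ⊆ ub := by
    intro c hcZ hchain hcne
    obtain ⟨J0, hJ0⟩ := hcne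
    have key : ∀ a ∈ ⋃₀ c, ∀ b ∈ ⋃₀ c, ∃ J ∈ c, a ∈ J ∧ b ∈ J := by
      rintro a ⟨J1, hJ1, ha⟩ b ⟨J2, hJ2, hb⟩
      rcases eq_or_ne J1 J2 with rfl | hne
      · exact ⟨J1, hJ1, ha, hb⟩
      · rcases hchain hJ1 hJ2 hne with h | h
        · exact ⟨J2, hJ2, h ha, hb⟩
        · exact ⟨J1, hJ1, ha, h hb⟩
    refine ⟨⋃₀ c, ⟨⟨?_, ?_, ?_, ?_⟩, ?_, ?_⟩, fun s hs => Set.subset_sUnion_of_mem hs⟩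
    · exact ⟨J0, hJ0, (hcZ hJ0).1.1⟩
    · intro a ha b hb w hw
      obtain ⟨J, hJ, haJ, hbJ⟩ := key a ha b hb
      exact ⟨J, hJ, (hcZ hJ).1.2.1 a haJ b hbJ hw⟩
    · rintro a ⟨J, hJ, haJ⟩
      exact ⟨J, hJ, (hcZ hJ).1.2.2.1 a haJ⟩
    · rintro r a ⟨J, hJ, haJ⟩
      exact ⟨J, hJ, (hcZ hJ).1.2.2.2 r a haJ⟩
    · exact (hcZ hJ0).2.1.trans (Set.subset_sUnion_of_mem hJ0)
    · rintro n ⟨J, hJ, hpow⟩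
      exact (hcZ hJ).2.2 n hpow
  obtain ⟨M, hIM, hMmax'⟩ := zorn_subset_nonempty Z hub I hZI
  have hMmax : ∀ J ∈ Z, M ⊆ J → J = M :=
    fun J hJ hMJ => subset_antisymm (hMmax'.2 hJ hMJ) hMJ
  obtain ⟨hMideal, hIM', hMpow⟩ := hMmax'.1
  have hpow1 : H.pow x 1 = x := by
    show H.mul x H.one = x
    exact H.mul_one' x
  have hxM : x ∉ M := fun hxm => hMpow 0 (by rwa [hpow1])
  have hMne : M ≠ Set.univ := by
    intro h
    exact hxM (h ▸ Set.mem_univ x)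
  refine ⟨M, ⟨hMideal, hMne, ?_⟩, hIM, hxM⟩
  intro a b hab
  by_contra hcon
  push_neg at hcon
  obtain ⟨haM, hbM⟩ := hcon
  have gen_not_Z : ∀ c : R, c ∉ M → ∃ n : ℕ, H.pow x (n + 1) ∈ H.genIdeal (M ∪ {c}) := by
    intro c hcM
    by_contra h
    push_neg at h
    have hZ : H.genIdeal (M ∪ {c}) ∈ Z :=
      ⟨H.genIdeal_hyperideal' _,
       hIM'.trans (Set.subset_union_left.trans (H.subset_genIdeal' _)), h⟩
    have hMsub : M ⊆ H.genIdeal (M ∪ {c}) :=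
      Set.subset_union_left.trans (H.subset_genIdeal' _)
    have := hMmax _ hZ hMsub
    apply hcM
    rw [← this]
    exact H.subset_genIdeal' _ (Set.mem_union_right _ rfl)
  obtain ⟨m, hm⟩ := gen_not_Z a haM
  obtain ⟨k, hk⟩ := gen_not_Z b hbM
  have hmul := H.mul_mem_gen' hMideal a b _ hm _ hk
  rw [H.pow_add'] at hmul
  have hgen : H.genIdeal (M ∪ {H.mul a b}) ⊆ M :=
    H.genIdeal_le' hMideal (Set.union_subset subset_rfl (by simpa using hab))
  have : H.pow x (m + 1 + (k + 1)) ∈ M := hgen hmul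
  exact hMpow (m + k + 1) (by rwa [show m + 1 + (k + 1) = m + k + 1 + 1 by omega] at this)

lemma W_isOpen' (x : R) : @IsOpen H.Spectrum H.zariski (H.W x) := by
  have : H.W x = (H.V (H.genIdeal {x}))ᶜ := by
    ext P
    simp only [KHR.W, KHR.V, Set.mem_setOf_eq, Set.mem_compl_iff]
    constructor
    · intro hx hsub
      exact hx (hsub (H.subset_genIdeal' _ rfl))
    · intro h hx
      exact h (H.genIdeal_le' P.2.1 (by simpa using hx))
  rw [this]
  exact TopologicalSpace.GenerateOpen.basic _ ⟨H.genIdeal {x}, H.genIdeal_hyperideal' _, rfl⟩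

lemma isOpen_iff' (U : Set H.Spectrum) :
    @IsOpen H.Spectrum H.zariski U ↔ ∃ I : Set R, H.IsHyperideal I ∧ U = (H.V I)ᶜ := by
  constructor
  · intro h
    have h' : TopologicalSpace.GenerateOpen
        {U | ∃ I : Set R, H.IsHyperideal I ∧ U = (H.V I)ᶜ} U := h
    clear h
    induction h' with
    | basic _ hs => exact hs
    | univ =>
      refine ⟨Set.univ, H.univ_hyperideal', ?_⟩
      ext P
      simp only [KHR.V, Set.mem_univ, Set.mem_compl_iff, Set.mem_setOf_eq, true_iff]
      intro hsub
      exact P.2.2.1 (Set.eq_univ_of_univ_subset hsub)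
    | inter U1 U2 _ _ ih1 ih2 =>
      obtain ⟨I1, hI1, rfl⟩ := ih1
      obtain ⟨I2, hI2, rfl⟩ := ih2
      refine ⟨H.mulIdeal I1 I2, H.genIdeal_hyperideal' _, ?_⟩
      ext P
      simp only [Set.mem_inter_iff, Set.mem_compl_iff, KHR.V, Set.mem_setOf_eq]
      rw [← not_or]
      apply not_congr
      constructor
      · intro h
        apply H.genIdeal_le' P.2.1
        rintro z ⟨a, haI, b, hbI, rfl⟩
        rcases h with h | h
        · rw [H.mul_comm]; exact P.2.1.2.2.2 b a (h haI)
        · exact P.2.1.2.2.2 a b (h hbI)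
      · intro h
        by_contra hcon
        push_neg at hcon
        obtain ⟨a, haI, haP⟩ := Set.not_subset.1 hcon.1
        obtain ⟨b, hbI, hbP⟩ := Set.not_subset.1 hcon.2
        have : H.mul a b ∈ P.1 :=
          h (H.subset_genIdeal' _ ⟨a, haI, b, hbI, rfl⟩)
        rcases P.2.2.2 a b this with h' | h'
        · exact haP h'
        · exact hbP h'
    | sUnion S _ ih =>
      have hch : ∀ U : S, ∃ I : Set R, H.IsHyperideal I ∧ (U : Set H.Spectrum) = (H.V I)ᶜ :=
        fun U => ih U U.2
      choose I hIdeal hEq using hch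
      refine ⟨H.genIdeal (⋃ U : S, I U), H.genIdeal_hyperideal' _, ?_⟩
      ext P
      simp only [Set.mem_sUnion, Set.mem_compl_iff, KHR.V, Set.mem_setOf_eq]
      constructor
      · rintro ⟨U, hUS, hPU⟩ hsub
        have : P ∈ (H.V (I ⟨U, hUS⟩))ᶜ := hEq ⟨U, hUS⟩ ▸ hPU
        apply this
        intro z hz
        exact hsub (H.subset_genIdeal' _ (Set.mem_iUnion.2 ⟨⟨U, hUS⟩, hz⟩))
      · intro h
        by_contra hcon
        push_neg at hcon
        apply h
        apply H.genIdeal_le' P.2.1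
        intro z hz
        obtain ⟨U, hzU⟩ := Set.mem_iUnion.1 hz
        have hPU : P ∉ (U : Set H.Spectrum) := hcon U U.2
        rw [hEq U] at hPU
        simp only [Set.mem_compl_iff, KHR.V, Set.mem_setOf_eq, not_not] at hPU
        exact hPU hzU
  · rintro ⟨I, hI, rfl⟩
    exact TopologicalSpace.GenerateOpen.basic _ ⟨I, hI, rfl⟩

lemma W_subcover' (x : R) {ι : Type*} (I : ι → Set R)
    (hcov : H.W x ⊆ ⋃ i, (H.V (I i))ᶜ) :
    ∃ t : Finset ι, H.W x ⊆ ⋃ i ∈ t, (H.V (I i))ᶜ := by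
  classical
  set J : Set R := H.genIdeal (⋃ i, I i) with hJdef
  have hpow : ∃ n : ℕ, H.pow x (n + 1) ∈ J := by
    by_contra h
    push_neg at h
    obtain ⟨P, hP, hJP, hxP⟩ := H.exists_prime' (H.genIdeal_hyperideal' _) x h
    have hPW : (⟨P, hP⟩ : H.Spectrum) ∈ H.W x := hxP
    obtain ⟨i, hi⟩ := Set.mem_iUnion.1 (hcov hPW)
    apply hi
    intro z hz
    exact hJP (H.subset_genIdeal' _ (Set.mem_iUnion.2 ⟨i, hz⟩))
  obtain ⟨n, hn⟩ := hpow
  obtain ⟨t, hts, hxt⟩ := H.genIdeal_finite' hn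
  have hchoice : ∀ y ∈ t, ∃ i, y ∈ I i := fun y hy => Set.mem_iUnion.1 (hts hy)
  choose f hf using hchoice
  refine ⟨t.attach.image (fun y => f y.1 y.2), ?_⟩
  intro P hPW
  by_contra hcon
  simp only [Set.mem_iUnion, not_exists] at hcon
  have hsubP : ∀ i ∈ t.attach.image (fun y => f y.1 y.2), I i ⊆ P.1 := by
    intro i hi
    by_contra h
    exact hcon i hi h
  have htP : (↑t : Set R) ⊆ P.1 := by
    intro y hy
    have hfi : f y hy ∈ t.attach.image (fun y => f y.1 y.2) :=
      Finset.mem_image_of_mem _ (Finset.mem_attach t ⟨y, hy⟩)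
    exact hsubP _ hfi (hf y hy)
  have : H.pow x (n + 1) ∈ P.1 := H.genIdeal_le' P.2.1 htP hxt
  exact hPW (H.pow_mem_prime' P.2 n this)

lemma W_isCompact' (x : R) : @IsCompact H.Spectrum H.zariski (H.W x) := by
  letI := H.zariski
  apply isCompact_of_finite_subcover
  intro ι U hU hcov
  choose I hIdeal hEq using fun i => (H.isOpen_iff' (U i)).1 (hU i)
  have hcov' : H.W x ⊆ ⋃ i, (H.V (I i))ᶜ := by
    intro P hP
    obtain ⟨i, hi⟩ := Set.mem_iUnion.1 (hcov hP)
    exact Set.mem_iUnion.2 ⟨i, hEq i ▸ hi⟩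
  obtain ⟨t, ht⟩ := H.W_subcover' x I hcov'
  refine ⟨t, ?_⟩
  intro P hP
  obtain ⟨i, hit, hi⟩ := Set.mem_iUnion₂.1 (ht hP)
  exact Set.mem_iUnion₂.2 ⟨i, hit, (hEq i).symm ▸ hi⟩

end Stmt17Aux

end KHR

/-- `Spec R` is quasi-compact for the Zariski topology, each basic open
`W(x)` is quasi-compact, and an open subset of `Spec R` is quasi-compact iff it is a
finite union of sets `W(xᵢ)`. -/
theorem stmt17 {R : Type u} (H : KHR R) :
    @CompactSpace H.Spectrum H.zariski ∧
    (∀ x : R, @IsCompact H.Spectrum H.zariski (H.W x)) ∧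
    (∀ U : Set H.Spectrum, @IsOpen H.Spectrum H.zariski U →
      (@IsCompact H.Spectrum H.zariski U ↔ ∃ s : Finset R, U = ⋃ x ∈ s, H.W x)) := by
  classical
  letI := H.zariski
  have hW : ∀ x : R, IsCompact (H.W x) := fun x => H.W_isCompact' x
  refine ⟨?_, hW, ?_⟩
  · have huniv : (Set.univ : Set H.Spectrum) = H.W H.one := by
      ext P
      simp only [Set.mem_univ, KHR.W, Set.mem_setOf_eq, true_iff]
      exact H.one_not_mem_prime' P.2
    exact ⟨huniv ▸ hW H.one⟩
  · intro U hU
    constructor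
    · intro hcomp
      obtain ⟨I, hI, rfl⟩ := (H.isOpen_iff' U).1 hU
      have hcover : (H.V I)ᶜ ⊆ ⋃ x : I, H.W (x : R) := by
        intro P hP
        simp only [Set.mem_compl_iff, KHR.V, Set.mem_setOf_eq] at hP
        obtain ⟨x, hxI, hxP⟩ := Set.not_subset.1 hP
        exact Set.mem_iUnion.2 ⟨⟨x, hxI⟩, hxP⟩
      obtain ⟨t, ht⟩ := hcomp.elim_finite_subcover _ (fun x : I => H.W_isOpen' (x : R)) hcover
      refine ⟨t.image Subtype.val, subset_antisymm ?_ ?_⟩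
      · intro P hP
        obtain ⟨x, hxt, hxP⟩ := Set.mem_iUnion₂.1 (ht hP)
        exact Set.mem_iUnion₂.2 ⟨(x : R), Finset.mem_image.2 ⟨x, hxt, rfl⟩, hxP⟩
      · intro P hP
        obtain ⟨x, hxs, hxP⟩ := Set.mem_iUnion₂.1 hP
        obtain ⟨x', _, rfl⟩ := Finset.mem_image.1 hxs
        simp only [Set.mem_compl_iff, KHR.V, Set.mem_setOf_eq]
        intro hsub
        exact hxP (hsub x'.2)
    · rintro ⟨s, rfl⟩
      exact s.finite_toSet.isCompact_biUnion (fun x _ => hW x)
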